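/- arXiv:1502.04670 — 5 statements merged into one kernel-verified Lean document; each statement's English description precedes it below -/
import Mathlib

section
/- Orthogonality of the cas kernel (Theorem 1): for all integers i and t, ∑_{k=0}^{N−1} cas_k(i)·cas_k(t) equals (N : K) if i ≡ t (mod N), and equals 0 otherwise. -/
open scoped BigOperators

/-- The finite field cosine: `cos_k(∠α^i) = (α^{ik} + α^{-ik})/2`,
where `α^{-ik}` denotes `(α⁻¹)^{ik}`. -/
noncomputable def fcos {K : Type*} [Field K] (α : Kˣ) (k i : ℤ) : K :=
  (((α ^ (i * k) : Kˣ) : K) + ((α⁻¹ ^ (i * k) : Kˣ) : K)) / 2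

/-- The finite field sine: `sin_k(∠α^i) = (α^{ik} - α^{-ik})/(2j)`. -/
noncomputable def fsin {K : Type*} [Field K] (α : Kˣ) (j : K) (k i : ℤ) : K :=
  (((α ^ (i * k) : Kˣ) : K) - ((α⁻¹ ^ (i * k) : Kˣ) : K)) / (2 * j)

/-- The finite field `cas` function: `cas_k(∠α^i) = cos_k(∠α^i) + sin_k(∠α^i)`. -/
noncomputable def fcas {K : Type*} [Field K] (α : Kˣ) (j : K) (k i : ℤ) : K :=
  fcos α k i + fsin α j k i

/-! Writing `a = (1 + j⁻¹)/2` and `b = (1 - j⁻¹)/2`, one has `cas_k(i) = a α^{ik} + b α^{-ik}`, and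
`j² = -1` gives `2ab = 1` and `a² + b² = 0`. Expanding `cas_k(i) cas_k(t)` and summing over `k`
turns every term into a geometric sum `∑_k α^{mk}`, which is `N` if `N ∣ m` and `0` otherwise.
The `α^{±(i+t)k}` sums then cancel because `a² + b² = 0`, and the `α^{±(i-t)k}` sums add up to
`N` exactly when `N ∣ i - t`. -/

theorem two_ne_zero_of_charP_of_odd {R : Type*} [NonAssocSemiring R] [Nontrivial R]
    {p : ℕ} [CharP R p] (hp : Odd p) : (2 : R) ≠ 0 := by
  intro h
  obtain rfl : p = 2 := CharP.eq R ‹_› (CharTwo.of_one_ne_zero_of_two_eq_zero one_ne_zero h)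
  exact Nat.not_odd_iff_even.2 even_two hp

theorem geom_sum_eq_zero_of_pow_eq_one {K : Type*} [DivisionRing K] {x : K} {n : ℕ}
    (hx : x ≠ 1) (hxn : x ^ n = 1) : ∑ k ∈ Finset.range n, x ^ k = 0 := by
  rw [geom_sum_eq hx, hxn, sub_self, zero_div]

theorem sum_range_zpow_mul_of_orderOf_eq {K : Type*} [DivisionRing K] {α : Kˣ} {N : ℕ}
    (hα : orderOf α = N) (m : ℤ) :
    ∑ k ∈ Finset.range N, ((α ^ (m * k) : Kˣ) : K) = if (N : ℤ) ∣ m then (N : K) else 0 := by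
  have hpow (k : ℕ) : ((α ^ (m * k) : Kˣ) : K) = ((α ^ m : Kˣ) : K) ^ k := by
    rw [zpow_mul, zpow_natCast, Units.val_pow_eq_pow_val]
  simp only [hpow]
  have hdvd : (N : ℤ) ∣ m ↔ α ^ m = 1 := hα ▸ orderOf_dvd_iff_zpow_eq_one
  split_ifs with hm
  · simp [hdvd.1 hm]
  · refine geom_sum_eq_zero_of_pow_eq_one (mt Units.val_eq_one.1 (hdvd.not.1 hm)) ?_
    rw [← Units.val_pow_eq_pow_val, ← hα, zpow_pow_orderOf, Units.val_one]

theorem fcas_eq {K : Type*} [Field K] (α : Kˣ) (j : K) (k i : ℤ) :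
    fcas α j k i = (1 + j⁻¹) / 2 * ((α ^ (i * k) : Kˣ) : K)
      + (1 - j⁻¹) / 2 * ((α ^ (-i * k) : Kˣ) : K) := by
  rw [fcas, fcos, fsin, inv_zpow', neg_mul]
  ring

theorem fcas_mul_fcas {K : Type*} [Field K] (α : Kˣ) (j : K) (k i t : ℤ) :
    fcas α j k i * fcas α j k t =
      ((1 + j⁻¹) / 2) ^ 2 * ((α ^ ((i + t) * k) : Kˣ) : K)
        + (1 + j⁻¹) / 2 * ((1 - j⁻¹) / 2)
          * (((α ^ ((i - t) * k) : Kˣ) : K) + ((α ^ ((t - i) * k) : Kˣ) : K))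
        + ((1 - j⁻¹) / 2) ^ 2 * ((α ^ (-(i + t) * k) : Kˣ) : K) := by
  simp only [fcas_eq, show (i + t) * k = i * k + t * k by ring,
    show (i - t) * k = i * k + -t * k by ring, show (t - i) * k = -i * k + t * k by ring,
    show -(i + t) * k = -i * k + -t * k by ring, zpow_add, Units.val_mul]
  ring

open Classical in
theorem fcas_orthogonal_general (p : ℕ) (hpodd : Odd p)
    (K : Type*) [Field K] [CharP K p] (j : K) (hj : j ^ 2 = -1)
    (α : Kˣ) (N : ℕ) (hα : orderOf α = N) (i t : ℤ) :
    (∑ k ∈ Finset.range N, fcas α j (k : ℤ) i * fcas α j (k : ℤ) t) =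
      if i ≡ t [ZMOD (N : ℤ)] then (N : K) else 0 := by
  have h2 : (2 : K) ≠ 0 := two_ne_zero_of_charP_of_odd hpodd
  have hj' : j⁻¹ ^ 2 = -1 := by rw [inv_pow, hj, inv_neg, inv_one]
  set a := (1 + j⁻¹) / 2
  set b := (1 - j⁻¹) / 2
  have hab : 2 * (a * b) = 1 := by
    simp only [a, b]; field_simp; linear_combination -hj'
  have hsq : a ^ 2 + b ^ 2 = 0 := by
    simp only [a, b]; field_simp; linear_combination 2 * hj'
  have hsub : (N : ℤ) ∣ i - t ↔ (N : ℤ) ∣ t - i := dvd_sub_comm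
  simp only [fcas_mul_fcas, Finset.sum_add_distrib, ← Finset.mul_sum,
    sum_range_zpow_mul_of_orderOf_eq hα, dvd_neg, Int.modEq_iff_dvd, hsub]
  generalize (if (N : ℤ) ∣ i + t then (N : K) else 0) = x
  generalize (if (N : ℤ) ∣ t - i then (N : K) else 0) = y
  linear_combination x * hsq + y * hab

open Classical in
/-- Theorem 1, orthogonality of the cas kernel:
`∑_{k=0}^{N-1} cas_k(i)·cas_k(t)` equals `N` when `i ≡ t (mod N)` and `0` otherwise. -/
theorem fcas_orthogonal (p : ℕ) (hp : p.Prime) (hpodd : Odd p)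
    (K : Type*) [Field K] [CharP K p] (j : K) (hj : j ^ 2 = -1)
    (α : Kˣ) (N : ℕ) (hN : 1 ≤ N) (hα : orderOf α = N) (i t : ℤ) :
    (∑ k ∈ Finset.range N, fcas α j (k : ℤ) i * fcas α j (k : ℤ) t) =
      if i ≡ t [ZMOD (N : ℤ)] then (N : K) else 0 :=
  fcas_orthogonal_general p hpodd K j hj α N hα i t
end

section
/- Time shift property (H2): let g = (g_0, …, g_{N−1}) have entries in K with FFHT G, and fix an integer d. Define v by v_i := g_{(i−d) mod N} and let V be the FFHT of v. Then for every k, V_k = cos_k(d)·G_k + sin_k(d)·G_{(N−k) mod N}. -/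
/-! Since `α` has order dividing `N`, `cas_k(i)` depends only on `i * k mod N`. Reindexing the
sum by `i ↦ i + d` and using the addition formulas for `cos` and `sin` (the one for `cos` is
where `j ^ 2 = -1` enters) gives `cas_k(m + d) = cos_k(d) cas_k(m) + sin_k(d) cas_k(-m)`,
and `cas_k(-m) = cas_{-k}(m)`. -/

open scoped BigOperators

/-- The finite field Hartley transform of a vector `v` indexed by `ZMod N`:
`V_k = ∑_{i=0}^{N-1} v_i · cas_k(∠α^i)`. -/
noncomputable def ffht {K : Type*} [Field K] (α : Kˣ) (j : K) {N : ℕ} [NeZero N]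
    (v : ZMod N → K) (k : ZMod N) : K :=
  ∑ i : ZMod N, v i * fcas α j (k.val : ℤ) (i.val : ℤ)

section Trigonometry

variable {K : Type*} [Field K] (α : Kˣ) (j : K)

lemma fcos_neg (k i : ℤ) : fcos α k (-i) = fcos α k i := by
  simp only [fcos, neg_mul, zpow_neg, inv_zpow', inv_inv, add_comm]

lemma fsin_neg (k i : ℤ) : fsin α j k (-i) = -fsin α j k i := by
  simp only [fsin, neg_mul, zpow_neg, inv_zpow', inv_inv, ← neg_div, neg_sub]

variable {α j}

lemma fcos_add (hj : j ^ 2 = -1) (h2 : (2 : K) ≠ 0) (k a b : ℤ) :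
    fcos α k (a + b) = fcos α k a * fcos α k b - fsin α j k a * fsin α j k b := by
  have hj0 : j ≠ 0 := by rintro rfl; simp at hj
  simp only [fcos, fsin, add_mul, zpow_add, inv_zpow', zpow_neg, Units.val_mul,
    Units.val_inv_eq_inv_val]
  set x := ((α ^ (a * k) : Kˣ) : K)
  set y := ((α ^ (b * k) : Kˣ) : K)
  have hx : x ≠ 0 := Units.ne_zero _
  have hy : y ≠ 0 := Units.ne_zero _
  field_simp
  linear_combination (x ^ 2 - 1) * (y ^ 2 - 1) * hj

lemma fsin_add (hj : j ≠ 0) (h2 : (2 : K) ≠ 0) (k a b : ℤ) :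
    fsin α j k (a + b) = fsin α j k a * fcos α k b + fcos α k a * fsin α j k b := by
  simp only [fcos, fsin, add_mul, zpow_add, inv_zpow', zpow_neg, Units.val_mul,
    Units.val_inv_eq_inv_val]
  have hx : ((α ^ (a * k) : Kˣ) : K) ≠ 0 := Units.ne_zero _
  have hy : ((α ^ (b * k) : Kˣ) : K) ≠ 0 := Units.ne_zero _
  field_simp
  ring

lemma fcas_add (hj : j ^ 2 = -1) (h2 : (2 : K) ≠ 0) (k a b : ℤ) :
    fcas α j k (a + b) = fcos α k b * fcas α j k a + fsin α j k b * fcas α j k (-a) := by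
  have hj0 : j ≠ 0 := by rintro rfl; simp at hj
  simp only [fcas, fcos_add hj h2, fsin_add hj0 h2, fcos_neg, fsin_neg]
  ring

end Trigonometry

section Periodicity

variable {K : Type*} [Field K] {α : Kˣ} {N : ℕ}

lemma fcas_eq_of_intCast_mul_eq (j : K) (hα : orderOf α ∣ N) {k k' i i' : ℤ}
    (h : ((i * k : ℤ) : ZMod N) = ((i' * k' : ℤ) : ZMod N)) :
    fcas α j k i = fcas α j k' i' := by
  have hpow : α ^ (i * k) = α ^ (i' * k') := zpow_eq_zpow_iff_modEq.mpr <|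
    ((ZMod.intCast_eq_intCast_iff _ _ N).mp h).of_dvd (Int.natCast_dvd_natCast.mpr hα)
  simp only [fcas, fcos, fsin, inv_zpow, hpow]

variable [NeZero N]

lemma fcas_val_add_intCast (j : K) (hj : j ^ 2 = -1) (h2 : (2 : K) ≠ 0)
    (hα : orderOf α ∣ N) (k m : ZMod N) (d : ℤ) :
    fcas α j k.val (m + d : ZMod N).val =
      fcos α k.val d * fcas α j k.val m.val + fsin α j k.val d * fcas α j (-k).val m.val := by
  have hshift : fcas α j k.val (m + d : ZMod N).val = fcas α j k.val (m.val + d) :=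
    fcas_eq_of_intCast_mul_eq j hα (by push_cast [ZMod.natCast_val, ZMod.cast_id]; ring)
  have hreflect : fcas α j k.val (-m.val) = fcas α j (-k).val m.val :=
    fcas_eq_of_intCast_mul_eq j hα (by push_cast [ZMod.natCast_val, ZMod.cast_id]; ring)
  rw [hshift, fcas_add hj h2, hreflect]

end Periodicity

theorem ffht_comp_sub_intCast {K : Type*} [Field K] {α : Kˣ} {j : K} {N : ℕ} [NeZero N]
    (hj : j ^ 2 = -1) (h2 : (2 : K) ≠ 0) (hα : orderOf α ∣ N)
    (g : ZMod N → K) (d : ℤ) (k : ZMod N) :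
    ffht α j (fun i => g (i - (d : ZMod N))) k =
      fcos α k.val d * ffht α j g k + fsin α j k.val d * ffht α j g (-k) := by
  simp only [ffht, Finset.mul_sum, ← Finset.sum_add_distrib]
  refine (Fintype.sum_equiv (Equiv.addRight (d : ZMod N)) _ _ fun m => ?_).symm
  rw [Equiv.coe_addRight, add_sub_cancel_right, fcas_val_add_intCast j hj h2 hα]
  ring

theorem ffht_time_shift_general (p : ℕ) (hpodd : Odd p)
    (K : Type*) [Field K] [CharP K p] (j : K) (hj : j ^ 2 = -1)
    (α : Kˣ) (N : ℕ) [NeZero N] (hα : orderOf α = N)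
    (g G : ZMod N → K) (hG : ∀ k, G k = ffht α j g k) (d : ℤ)
    (v V : ZMod N → K) (hv : ∀ i : ZMod N, v i = g (i - (d : ZMod N)))
    (hV : ∀ k, V k = ffht α j v k) (k : ZMod N) :
    V k = fcos α (k.val : ℤ) d * G k + fsin α j (k.val : ℤ) d * G (-k) := by
  have h2 : (2 : K) ≠ 0 := Ring.two_ne_zero <| by
    rw [ringChar.eq K p]
    rintro rfl
    exact Nat.not_odd_iff_even.mpr even_two hpodd
  rw [hV, hG, hG, funext hv]
  exact ffht_comp_sub_intCast hj h2 hα.dvd g d k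

/-- H2, time shift: if `v_i = g_{i-d}` (indices mod `N`), then
`V_k = cos_k(d)·G_k + sin_k(d)·G_{-k}`. -/
theorem ffht_time_shift (p : ℕ) (hp : p.Prime) (hpodd : Odd p)
    (K : Type*) [Field K] [CharP K p] (j : K) (hj : j ^ 2 = -1)
    (α : Kˣ) (N : ℕ) [NeZero N] (hα : orderOf α = N)
    (g G : ZMod N → K) (hG : ∀ k, G k = ffht α j g k) (d : ℤ)
    (v V : ZMod N → K) (hv : ∀ i : ZMod N, v i = g (i - (d : ZMod N)))
    (hV : ∀ k, V k = ffht α j v k) (k : ZMod N) :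
    V k = fcos α (k.val : ℤ) d * G k + fsin α j (k.val : ℤ) d * G (-k) :=
  ffht_time_shift_general p hpodd K j hj α N hα g G hG d v V hv hV k
end

section
/- Cyclic convolution property (H7): let g and v be vectors of length N with entries in K, with FFHTs G and V respectively, and let w be their cyclic convolution, w_i := ∑_{m=0}^{N−1} g_m·v_{(i−m) mod N}. Then the FFHT W of w satisfies, for every k, W_k = (1/2)·(G_k·V_k + G_k·V_{k'} + G_{k'}·V_k − G_{k'}·V_{k'}), where k' := (N−k) mod N. -/
open scoped BigOperators

/-! Since `α ^ N = 1`, `i ↦ α ^ i` is an additive character `ψ` of `ZMod N`, and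
`cas_k(i) = (1 - j)/2 · ψ(k i) + (1 + j)/2 · ψ(-k i)`. So the FFHT at `k` is a fixed combination of
the character sums at `k` and `-k`, each of which turns cyclic convolution into a product; the
formula is what remains after eliminating those sums, using `j² = -1`. -/

open Finset AddChar

theorem AddChar.zmodChar_intCast {G : Type*} [CommGroup G] {N : ℕ} [NeZero N] {ζ : G}
    (hζ : ζ ^ N = 1) (m : ℤ) : zmodChar N hζ (m : ZMod N) = ζ ^ m := by
  rw [zmodChar_apply, ← zpow_natCast, ZMod.val_intCast, ← zpow_eq_zpow_emod' m hζ]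

theorem sum_conv_mul_addChar {G R : Type*} [AddCommGroup G] [Fintype G] [CommRing R]
    (ψ : AddChar G R) (g v : G → R) :
    ∑ i, (∑ m, g m * v (i - m)) * ψ i = (∑ m, g m * ψ m) * ∑ n, v n * ψ n := by
  simp_rw [sum_mul, mul_sum]
  rw [sum_comm]
  refine sum_congr rfl fun m _ => ?_
  rw [← Equiv.sum_comp (Equiv.addRight m)]
  refine sum_congr rfl fun n _ => ?_
  simp only [Equiv.coe_addRight, add_sub_cancel_right, map_add_eq_mul]
  ring

theorem fcas_eq_zpow {K : Type*} [Field K] (α : Kˣ) {j : K} (hj : j ^ 2 = -1) (h2 : (2 : K) ≠ 0)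
    (k i : ℤ) :
    fcas α j k i =
      (1 - j) / 2 * ((α ^ (i * k) : Kˣ) : K) + (1 + j) / 2 * ((α ^ (-(i * k)) : Kˣ) : K) := by
  have hj0 : j ≠ 0 := by rintro rfl; norm_num at hj
  rw [fcas, fcos, fsin, inv_zpow']
  field_simp
  linear_combination (((α ^ (i * k) : Kˣ) : K) - ((α ^ (-(i * k)) : Kˣ) : K)) * hj

theorem ffht_eq_sum {K : Type*} [Field K] {α : Kˣ} {N : ℕ} [NeZero N] {ψ : ZMod N → K}
    (hψ : ∀ m : ℤ, ψ m = ((α ^ m : Kˣ) : K)) {j : K} (hj : j ^ 2 = -1) (h2 : (2 : K) ≠ 0)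
    (u : ZMod N → K) (k : ZMod N) :
    ffht α j u k = (1 - j) / 2 * ∑ i, u i * ψ (k * i) + (1 + j) / 2 * ∑ i, u i * ψ (-k * i) := by
  have hcast (i : ZMod N) : (((i.val : ℤ) * k.val : ℤ) : ZMod N) = k * i := by
    push_cast; rw [ZMod.natCast_zmod_val, ZMod.natCast_zmod_val, mul_comm]
  rw [ffht, mul_sum, mul_sum, ← sum_add_distrib]
  refine sum_congr rfl fun i _ => ?_
  rw [fcas_eq_zpow α hj h2, ← hψ, ← hψ, Int.cast_neg, hcast, neg_mul]
  ring

theorem hartley_mul_eq {K : Type*} [Field K] {a b j : K} (hj : j ^ 2 = -1) (h2 : (2 : K) ≠ 0)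
    (ha : 2 * a = 1 - j) (hb : 2 * b = 1 + j) (P Q P' Q' : K) :
    a * (P * P') + b * (Q * Q') = 1 / 2 *
      ((a * P + b * Q) * (a * P' + b * Q') + (a * P + b * Q) * (a * Q' + b * P') +
        (a * Q + b * P) * (a * P' + b * Q') - (a * Q + b * P) * (a * Q' + b * P')) := by
  obtain rfl : a = (1 - j) / 2 := by rw [← ha, mul_div_cancel_left₀ _ h2]
  obtain rfl : b = (1 + j) / 2 := by rw [← hb, mul_div_cancel_left₀ _ h2]
  field_simp
  linear_combination 2 * (P - Q) * (P' - Q') * hj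

theorem ffht_cyclic_convolution_general (p : ℕ) (hpodd : Odd p)
    (K : Type*) [Field K] [CharP K p] (j : K) (hj : j ^ 2 = -1)
    (α : Kˣ) (N : ℕ) [NeZero N] (hα : orderOf α = N)
    (g G : ZMod N → K) (hG : ∀ k, G k = ffht α j g k)
    (v V : ZMod N → K) (hV : ∀ k, V k = ffht α j v k)
    (w W : ZMod N → K) (hw : ∀ i : ZMod N, w i = ∑ m : ZMod N, g m * v (i - m))
    (hW : ∀ k, W k = ffht α j w k) (k : ZMod N) :
    W k = (1 / 2 : K) *
      (G k * V k + G k * V (-k) + G (-k) * V k - G (-k) * V (-k)) := by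
  have h2 : (2 : K) ≠ 0 := Ring.two_ne_zero <| by
    rw [ringChar.eq K p]; rintro rfl; exact Nat.not_even_iff_odd.mpr hpodd even_two
  have hαN : α ^ N = 1 := hα ▸ pow_orderOf_eq_one α
  set ψ := (Units.coeHom K).compAddChar (zmodChar N hαN)
  have hψ (m : ℤ) : ψ m = ((α ^ m : Kˣ) : K) := by simp [ψ, zmodChar_intCast]
  have hconv (c : ZMod N) :
      ∑ i, w i * ψ (c * i) = (∑ i, g i * ψ (c * i)) * ∑ i, v i * ψ (c * i) := by
    simp_rw [hw]; exact sum_conv_mul_addChar (ψ.mulShift c) g v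
  simp only [hW, hG, hV, ffht_eq_sum hψ hj h2, neg_neg, hconv]
  exact hartley_mul_eq hj h2 (mul_div_cancel₀ _ h2) (mul_div_cancel₀ _ h2) _ _ _ _

/-- H7, cyclic convolution: if `w = g ⋆ v` is the cyclic convolution,
then `W_k = (1/2)·(G_k V_k + G_k V_{-k} + G_{-k} V_k − G_{-k} V_{-k})`. -/
theorem ffht_cyclic_convolution (p : ℕ) (hp : p.Prime) (hpodd : Odd p)
    (K : Type*) [Field K] [CharP K p] (j : K) (hj : j ^ 2 = -1)
    (α : Kˣ) (N : ℕ) [NeZero N] (hα : orderOf α = N)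
    (g G : ZMod N → K) (hG : ∀ k, G k = ffht α j g k)
    (v V : ZMod N → K) (hV : ∀ k, V k = ffht α j v k)
    (w W : ZMod N → K) (hw : ∀ i : ZMod N, w i = ∑ m : ZMod N, g m * v (i - m))
    (hW : ∀ k, W k = ffht α j w k) (k : ZMod N) :
    W k = (1 / 2 : K) *
      (G k * V k + G k * V (-k) + G (-k) * V k - G (-k) * V (-k)) :=
  ffht_cyclic_convolution_general p hpodd K j hj α N hα g G hG v V hV w W hw hW k
end

section
/- Parseval relation (H8): if g = (g_0, …, g_{N−1}) has entries in K and G is its FFHT, then (N : K)·∑_{i=0}^{N−1} g_i² = ∑_{k=0}^{N−1} G_k². -/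
open scoped BigOperators

/-- H8, Parseval's relation: `N·∑_{i=0}^{N-1} g_i² = ∑_{k=0}^{N-1} G_k²`. -/
theorem ffht_parseval (p : ℕ) (hp : p.Prime) (hpodd : Odd p)
    (K : Type*) [Field K] [CharP K p] (j : K) (hj : j ^ 2 = -1)
    (α : Kˣ) (N : ℕ) [NeZero N] (hα : orderOf α = N)
    (g G : ZMod N → K) (hG : ∀ k, G k = ffht α j g k) :
    (N : K) * ∑ i : ZMod N, g i ^ 2 = ∑ k : ZMod N, G k ^ 2 := by
  classical
  have hp2 : p ≠ 2 := by rintro rfl; simp [Nat.odd_iff] at hpodd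
  have h2 : (2 : K) ≠ 0 := by
    intro h
    have hd : (p : ℕ) ∣ 2 := (CharP.cast_eq_zero_iff K p 2).mp (by exact_mod_cast h)
    exact hp2 ((Nat.prime_dvd_prime_iff_eq hp Nat.prime_two).mp hd)
  have hj0 : j ≠ 0 := by
    intro h
    rw [h] at hj
    simp at hj
  have hjj : j * j = -1 := by rw [← sq]; exact hj
  have hjinv : j⁻¹ = -j := by
    have hm : j * (-j) = 1 := by linear_combination -hj
    exact inv_eq_of_mul_eq_one_right hm
  set b : K := (α : K) with hbdef
  have hb : b ≠ 0 := Units.ne_zero α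
  have hbN : b ^ (N : ℕ) = 1 := by
    rw [hbdef, ← Units.val_pow_eq_pow_val, ← hα, pow_orderOf_eq_one, Units.val_one]
  -- geometric sum orthogonality
  have hSum : ∀ m : ℤ, ∑ k : ZMod N, b ^ (m * (k.val : ℤ)) =
      if ((N : ℤ) ∣ m) then (N : K) else 0 := by
    intro m
    have hterm : ∀ k : ZMod N, b ^ (m * (k.val : ℤ)) = (b ^ m) ^ (k.val) := by
      intro k; rw [zpow_mul, ← zpow_natCast (b ^ m) k.val]
    rw [Finset.sum_congr rfl (fun k _ => hterm k)]
    have hrange : ∑ k : ZMod N, (b ^ m) ^ k.val = ∑ k ∈ Finset.range N, (b ^ m) ^ k :=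
      Finset.sum_nbij' (fun (k : ZMod N) => k.val) (fun k => (k : ZMod N))
        (fun a _ => Finset.mem_range.mpr (ZMod.val_lt a))
        (fun a _ => Finset.mem_univ _)
        (fun a _ => by simp [ZMod.natCast_val, ZMod.cast_id])
        (fun a ha => ZMod.val_cast_of_lt (Finset.mem_range.mp ha))
        (fun a _ => rfl)
    rw [hrange]
    by_cases hdvd : (N : ℤ) ∣ m
    · obtain ⟨t, rfl⟩ := hdvd
      have h1 : b ^ ((N : ℤ) * t) = 1 := by
        rw [zpow_mul, zpow_natCast, hbN, one_zpow]
      simp [h1]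
    · have hne : b ^ m ≠ 1 := by
        intro h
        apply hdvd
        rw [← hα, orderOf_dvd_iff_zpow_eq_one]
        ext
        simpa [Units.val_zpow_eq_zpow_val] using h
      rw [geom_sum_eq hne]
      have h1 : (b ^ m) ^ N = 1 := by
        rw [← zpow_natCast, ← zpow_mul, mul_comm, zpow_mul, zpow_natCast, hbN, one_zpow]
      simp [h1, hdvd]
  set u : K := (1 - j) / 2 with hu
  set v : K := (1 + j) / 2 with hv
  have h2u : 2 * u = 1 - j := by
    rw [hu, mul_comm, div_mul_cancel₀ _ h2]
  have h2v : 2 * v = 1 + j := by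
    rw [hv, mul_comm, div_mul_cancel₀ _ h2]
  have h4 : (2 : K) * 2 ≠ 0 := mul_ne_zero h2 h2
  have huv1 : u * u + v * v = 0 := by
    have key : (2 * 2) * (u * u + v * v) = 0 := by
      calc (2 * 2) * (u * u + v * v) = (2 * u) * (2 * u) + (2 * v) * (2 * v) := by ring
      _ = (1 - j) * (1 - j) + (1 + j) * (1 + j) := by rw [h2u, h2v]
      _ = 2 + 2 * (j * j) := by ring
      _ = 0 := by rw [hjj]; ring
    exact (mul_eq_zero.mp key).resolve_left h4
  have huv2 : u * v + u * v = 1 := by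
    have key : (2 * 2) * (u * v + u * v) = (2 * 2) * 1 := by
      calc (2 * 2) * (u * v + u * v) = ((2 * u) * (2 * v)) * 2 := by ring
      _ = ((1 - j) * (1 + j)) * 2 := by rw [h2u, h2v]
      _ = (1 - j * j) * 2 := by ring
      _ = (2 * 2) * 1 := by rw [hjj]; ring
    exact mul_left_cancel₀ h4 key
  have hcas : ∀ k i : ZMod N, fcas α j (k.val : ℤ) (i.val : ℤ)
      = u * b ^ ((i.val : ℤ) * (k.val : ℤ)) + v * (b ^ ((i.val : ℤ) * (k.val : ℤ)))⁻¹ := by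
    intro k i
    have hA : b ^ ((i.val : ℤ) * (k.val : ℤ)) ≠ 0 := zpow_ne_zero _ hb
    simp only [fcas, fcos, fsin, Units.val_zpow_eq_zpow_val, Units.val_inv_eq_inv_val,
      inv_zpow]
    set A : K := b ^ ((i.val : ℤ) * (k.val : ℤ)) with hAdef
    have hc : (2 : K) * j ≠ 0 := mul_ne_zero h2 hj0
    rw [div_add_div _ _ h2 hc, div_eq_iff (mul_ne_zero h2 hc)]
    linear_combination (-(2*j*A)) * h2u + (-(2*j*A⁻¹)) * h2v + (2*(A - A⁻¹)) * hjj
  -- the key orthogonality of cas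
  have hkey : ∀ i i' : ZMod N,
      ∑ k : ZMod N, fcas α j (k.val : ℤ) (i.val : ℤ) * fcas α j (k.val : ℤ) (i'.val : ℤ)
        = if i = i' then (N : K) else 0 := by
    intro i i'
    set x : ℤ := (i.val : ℤ) with hx
    set y : ℤ := (i'.val : ℤ) with hy
    have expand : ∀ k : ZMod N,
        fcas α j (k.val : ℤ) x * fcas α j (k.val : ℤ) y
          = u * u * b ^ ((x + y) * (k.val : ℤ)) + u * v * b ^ ((x - y) * (k.val : ℤ))
            + u * v * b ^ ((-(x - y)) * (k.val : ℤ))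
            + v * v * b ^ ((-(x + y)) * (k.val : ℤ)) := by
      intro k
      set z : ℤ := (k.val : ℤ) with hz
      have hA : b ^ (x * z) ≠ 0 := zpow_ne_zero _ hb
      have hB : b ^ (y * z) ≠ 0 := zpow_ne_zero _ hb
      have e1 : b ^ ((x + y) * z) = b ^ (x * z) * b ^ (y * z) := by
        rw [← zpow_add₀ hb]; ring_nf
      have e2 : b ^ ((x - y) * z) = b ^ (x * z) * (b ^ (y * z))⁻¹ := by
        rw [← zpow_neg, ← zpow_add₀ hb]; ring_nf
      have e3 : b ^ ((-(x - y)) * z) = (b ^ (x * z))⁻¹ * b ^ (y * z) := by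
        rw [← zpow_neg, ← zpow_add₀ hb]; ring_nf
      have e4 : b ^ ((-(x + y)) * z) = (b ^ (x * z))⁻¹ * (b ^ (y * z))⁻¹ := by
        rw [← zpow_neg, ← zpow_neg, ← zpow_add₀ hb]; ring_nf
      rw [hcas k i, hcas k i', e1, e2, e3, e4]
      ring
    rw [Finset.sum_congr rfl (fun k _ => expand k)]
    simp only [Finset.sum_add_distrib, ← Finset.mul_sum]
    rw [hSum, hSum, hSum, hSum]
    have hxi : ((x : ℤ) : ZMod N) = i := by
      rw [hx, Int.cast_natCast, ZMod.natCast_val, ZMod.cast_id]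
    have hyi : ((y : ℤ) : ZMod N) = i' := by
      rw [hy, Int.cast_natCast, ZMod.natCast_val, ZMod.cast_id]
    have hd : ((N : ℤ) ∣ (x - y)) ↔ i = i' := by
      rw [← ZMod.intCast_zmod_eq_zero_iff_dvd, Int.cast_sub, hxi, hyi, sub_eq_zero]
    simp only [dvd_neg, hd]
    have final : ∀ A B : K, u * u * A + u * v * B + u * v * B + v * v * A = B := by
      intro A B
      linear_combination A * huv1 + B * huv2
    exact final _ _
  -- main computation
  symm
  calc ∑ k : ZMod N, G k ^ 2
      = ∑ k : ZMod N, ∑ i : ZMod N, ∑ i' : ZMod N,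
          (g i * g i') * (fcas α j (k.val : ℤ) (i.val : ℤ) * fcas α j (k.val : ℤ) (i'.val : ℤ)) := by
        refine Finset.sum_congr rfl fun k _ => ?_
        rw [hG, ffht, sq, Finset.sum_mul_sum]
        exact Finset.sum_congr rfl fun i _ => Finset.sum_congr rfl fun i' _ => by ring
    _ = ∑ i : ZMod N, ∑ i' : ZMod N, (g i * g i') *
          ∑ k : ZMod N, fcas α j (k.val : ℤ) (i.val : ℤ) * fcas α j (k.val : ℤ) (i'.val : ℤ) := by
        rw [Finset.sum_comm]
        refine Finset.sum_congr rfl fun i _ => ?_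
        rw [Finset.sum_comm]
        exact Finset.sum_congr rfl fun i' _ => (Finset.mul_sum _ _ _).symm
    _ = ∑ i : ZMod N, ∑ i' : ZMod N, (g i * g i') * (if i = i' then (N : K) else 0) := by
        simp only [hkey]
    _ = ∑ i : ZMod N, (g i * g i) * (N : K) := by
        refine Finset.sum_congr rfl fun i _ => ?_
        simp only [mul_ite, mul_zero]
        rw [Finset.sum_ite_eq]
        simp
    _ = (N : K) * ∑ i : ZMod N, g i ^ 2 := by
        rw [Finset.mul_sum]
        exact Finset.sum_congr rfl fun i _ => by ring
end

section
/- Conjugation of the cas kernel: under the hypotheses j² = −1 and j^q = −j, for all integers k and i one has (cas_k(i))^q = cas_{−qk}(i), i.e., raising the kernel value to the q-th power replaces the frequency index k by −qk (mod N). -/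
open scoped BigOperators

/-- conjugation of the cas kernel: if `j² = -1` and `j^q = -j`, then
`(cas_k(i))^q = cas_{-qk}(i)`. -/
theorem fcas_pow_q (p : ℕ) (hp : p.Prime) (hpodd : Odd p) (r : ℕ) (hr : 1 ≤ r)
    (q : ℕ) (hq : q = p ^ r)
    (K : Type*) [Field K] [CharP K p] (j : K) (hj : j ^ 2 = -1) (hjq : j ^ q = -j)
    (α : Kˣ) (N : ℕ) (hα : orderOf α = N) (hdvd : ∃ m : ℕ, N ∣ q ^ m - 1)
    (k i : ℤ) :
    fcas α j k i ^ q = fcas α j (-(q : ℤ) * k) i := by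
  subst hq
  haveI : Fact p.Prime := ⟨hp⟩
  have h2 : (2:K) ≠ 0 := by
    have h := (CharP.cast_eq_zero_iff K p 2).not.mpr (by
      intro h
      have hp2 : p = 2 := (Nat.prime_dvd_prime_iff_eq hp Nat.prime_two).mp h
      rw [hp2] at hpodd
      exact absurd hpodd (by decide))
    simpa using h
  have hj0 : j ≠ 0 := by
    intro h
    rw [h] at hj
    simp at hj
  have h2q : (2:K) ^ (p ^ r) = 2 := by
    have h := add_pow_char_pow (1:K) 1 p r
    norm_num at h
    exact h
  have e1 : α ^ (i * (-((p ^ r : ℕ) : ℤ) * k)) = (α⁻¹ ^ (i * k)) ^ (p ^ r) := by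
    rw [← zpow_natCast _ (p ^ r), ← zpow_mul, inv_zpow, ← zpow_neg]
    congr 1
    push_cast
    ring
  have e2 : α⁻¹ ^ (i * (-((p ^ r : ℕ) : ℤ) * k)) = (α ^ (i * k)) ^ (p ^ r) := by
    rw [inv_zpow, ← zpow_natCast _ (p ^ r), ← zpow_mul, ← zpow_neg]
    congr 1
    push_cast
    ring
  simp only [fcas, fcos, fsin, e1, e2, Units.val_pow_eq_pow_val]
  rw [add_pow_char_pow, div_pow, div_pow, add_pow_char_pow, sub_pow_char_pow,
    mul_pow, h2q, hjq]
  field_simp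
  ring
end
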